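/- arXiv:2503.18266 — 2 statements merged into one kernel-verified Lean document; each statement's English description precedes it below -/
import Mathlib

section
/- Let L be a Lipschitz constant functional on C([0,1]) given by L(f) = sup{|f(x)-f(y)|/|x-y| : x ≠ y}, and let ρ_L be the associated Monge–Kantorovich metric on the set of Borel probability measures on [0,1]. Then for every f ∈ C([0,1]), L(f) = sup{|∫f dμ - ∫f dν| / ρ_L(μ,ν) : μ ≠ ν probability measures on [0,1]}. In particular, L is recovered from the metric ρ_L on the state space. -/
open scoped ENNReal unitInterval
open MeasureTheory

/-- The (possibly infinite) Lipschitz constant of a continuous complex-valued function. -/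
noncomputable def lipConst {X : Type*} [MetricSpace X] (f : C(X, ℂ)) : ℝ≥0∞ :=
  ⨆ p : {p : X × X // p.1 ≠ p.2}, ENNReal.ofReal (‖f p.1.1 - f p.1.2‖ / dist p.1.1 p.1.2)

/-- The Monge–Kantorovich distance on Borel probability measures on `[0,1]`. -/
noncomputable def mkDistMeas (μ ν : ProbabilityMeasure I) : ℝ :=
  sSup {r : ℝ | ∃ f : C(I, ℂ), lipConst f ≤ 1 ∧
    r = ‖∫ a, f a ∂(μ : Measure I) - ∫ a, f a ∂(ν : Measure I)‖}

lemma lip_of_lipConst_le {X : Type*} [MetricSpace X] {f : C(X, ℂ)} {K : ℝ} (hK : 0 ≤ K)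
    (h : lipConst f ≤ ENNReal.ofReal K) : ∀ x y : X, ‖f x - f y‖ ≤ K * dist x y := by
  intro x y
  rcases eq_or_ne x y with rfl | hxy
  · simp
  · have h1 : ENNReal.ofReal (‖f x - f y‖ / dist x y) ≤ ENNReal.ofReal K :=
      le_trans (le_iSup (fun p : {p : X × X // p.1 ≠ p.2} =>
        ENNReal.ofReal (‖f p.1.1 - f p.1.2‖ / dist p.1.1 p.1.2)) ⟨(x, y), hxy⟩) h
    have h2 : ‖f x - f y‖ / dist x y ≤ K := by
      have := (ENNReal.ofReal_le_ofReal_iff hK).mp h1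
      exact this
    have hd : (0 : ℝ) < dist x y := dist_pos.mpr hxy
    calc ‖f x - f y‖ = (‖f x - f y‖ / dist x y) * dist x y := by field_simp
    _ ≤ K * dist x y := by gcongr

lemma integrable_cm (g : C(I, ℂ)) (μ : Measure I) [IsFiniteMeasure μ] : Integrable g μ :=
  g.continuous.integrable_of_hasCompactSupport (HasCompactSupport.of_compactSpace g)

lemma lipConst_one_of (g : C(I, ℂ)) (h : ∀ x y : I, ‖g x - g y‖ ≤ dist x y) :
    lipConst g ≤ 1 := by
  apply iSup_le
  rintro ⟨⟨x, y⟩, hxy⟩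
  have hd : (0 : ℝ) < dist x y := dist_pos.mpr hxy
  have : ‖g x - g y‖ / dist x y ≤ 1 := by
    rw [div_le_one hd]; simpa using h x y
  calc ENNReal.ofReal (‖g x - g y‖ / dist x y) ≤ ENNReal.ofReal 1 :=
        ENNReal.ofReal_le_ofReal this
  _ = 1 := ENNReal.ofReal_one

lemma mem_mk_set (μ ν : ProbabilityMeasure I) {g : C(I, ℂ)} (hg : lipConst g ≤ 1) :
    ‖∫ a, g a ∂(μ : Measure I) - ∫ a, g a ∂(ν : Measure I)‖ ∈
      {r : ℝ | ∃ f : C(I, ℂ), lipConst f ≤ 1 ∧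
        r = ‖∫ a, f a ∂(μ : Measure I) - ∫ a, f a ∂(ν : Measure I)‖} :=
  ⟨g, hg, rfl⟩

lemma mk_set_bddAbove (μ ν : ProbabilityMeasure I) :
    BddAbove {r : ℝ | ∃ f : C(I, ℂ), lipConst f ≤ 1 ∧
      r = ‖∫ a, f a ∂(μ : Measure I) - ∫ a, f a ∂(ν : Measure I)‖} := by
  refine ⟨2, ?_⟩
  rintro r ⟨g, hg, rfl⟩
  have hlip : ∀ x y : I, ‖g x - g y‖ ≤ dist x y := fun x y => by
    simpa using lip_of_lipConst_le zero_le_one (by simpa using hg) x y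
  -- bound each integral of g - g 0 by 1
  have key : ∀ θ : ProbabilityMeasure I,
      ‖∫ a, (g a - g 0) ∂(θ : Measure I)‖ ≤ 1 := by
    intro θ
    have : ∀ a : I, ‖g a - g 0‖ ≤ 1 := fun a =>
      le_trans (hlip a 0) (by
        have h1 : dist a (0 : I) ≤ 1 := by
          rw [Subtype.dist_eq]
          have := a.2
          simp only [Set.mem_Icc] at this
          rw [Real.dist_eq]
          have h0 : (0:I).1 = (0:ℝ) := rfl
          rw [h0, sub_zero, abs_of_nonneg this.1]
          exact this.2
        exact h1)
    calc ‖∫ a, (g a - g 0) ∂(θ : Measure I)‖ ≤ 1 * ((θ : Measure I) Set.univ).toReal :=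
          norm_integral_le_of_norm_le_const (Filter.Eventually.of_forall fun a => this a)
    _ = 1 := by simp
  have hi : ∀ θ : ProbabilityMeasure I,
      ∫ a, (g a - g 0) ∂(θ : Measure I) = (∫ a, g a ∂(θ : Measure I)) - g 0 := by
    intro θ
    rw [integral_sub (integrable_cm g _) (integrable_const _), integral_const]
    simp
  have h1 := key μ; have h2 := key ν
  rw [hi] at h1 h2
  calc ‖∫ a, g a ∂(μ : Measure I) - ∫ a, g a ∂(ν : Measure I)‖
      = ‖((∫ a, g a ∂(μ : Measure I)) - g 0) - ((∫ a, g a ∂(ν : Measure I)) - g 0)‖ := by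
        ring_nf
  _ ≤ ‖(∫ a, g a ∂(μ : Measure I)) - g 0‖ + ‖(∫ a, g a ∂(ν : Measure I)) - g 0‖ :=
        norm_sub_le _ _
  _ ≤ 1 + 1 := add_le_add h1 h2
  _ = 2 := by norm_num

/-- the distance-to-a-point test function -/
noncomputable def distCM (y : I) : C(I, ℂ) :=
  ⟨fun t => (dist t y : ℂ), by continuity⟩

lemma distCM_lip (y : I) : lipConst (distCM y) ≤ 1 := by
  apply lipConst_one_of
  intro a b
  simp only [distCM, ContinuousMap.coe_mk]
  rw [← Complex.ofReal_sub, Complex.norm_real]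
  exact abs_dist_sub_le a b y

noncomputable def diracPM (x : I) : ProbabilityMeasure I :=
  ⟨Measure.dirac x, Measure.dirac.isProbabilityMeasure⟩

lemma diracPM_ne {x y : I} (hxy : x ≠ y) : diracPM x ≠ diracPM y := by
  intro h
  have h' : (Measure.dirac x : Measure I) = Measure.dirac y := congrArg Subtype.val h
  have hx : (Measure.dirac x : Measure I) {y} = 0 := by
    rw [Measure.dirac_apply' _ (measurableSet_singleton y)]
    simp [Set.indicator_of_notMem, hxy]
  have hy : (Measure.dirac y : Measure I) {y} = 1 := by
    rw [Measure.dirac_apply' _ (measurableSet_singleton y)]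
    simp
  rw [h', hy] at hx
  exact one_ne_zero hx

lemma integral_diracPM (g : C(I, ℂ)) (x : I) :
    ∫ a, g a ∂((diracPM x : ProbabilityMeasure I) : Measure I) = g x := by
  have : ((diracPM x : ProbabilityMeasure I) : Measure I) = Measure.dirac x := rfl
  rw [this, integral_dirac]

lemma mkDist_dirac {x y : I} (hxy : x ≠ y) : mkDistMeas (diracPM x) (diracPM y) = dist x y := by
  unfold mkDistMeas
  apply le_antisymm
  · apply csSup_le
    · exact ⟨_, distCM y, distCM_lip y, rfl⟩
    · rintro r ⟨g, hg, rfl⟩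
      rw [integral_diracPM, integral_diracPM]
      simpa using lip_of_lipConst_le zero_le_one (by simpa using hg) x y
  · have hmem := mem_mk_set (diracPM x) (diracPM y) (distCM_lip y)
    have := le_csSup (mk_set_bddAbove (diracPM x) (diracPM y)) hmem
    rw [integral_diracPM, integral_diracPM] at this
    simp only [distCM, ContinuousMap.coe_mk] at this
    rwa [dist_self, Complex.ofReal_zero, sub_zero, Complex.norm_real,
      Real.norm_eq_abs, abs_of_nonneg dist_nonneg] at this

lemma mkDist_nonneg (μ ν : ProbabilityMeasure I) : 0 ≤ mkDistMeas μ ν := by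
  have h0 : lipConst (0 : C(I, ℂ)) ≤ 1 := by
    apply lipConst_one_of; intro x y; simp [dist_nonneg]
  have := le_csSup (mk_set_bddAbove μ ν) (mem_mk_set μ ν h0)
  simpa [mkDistMeas] using this

/-- The Lipschitz constant on `C([0,1])` is recovered from the Monge–Kantorovich metric on the
state space: `L(f) = sup{|∫f dμ - ∫f dν| / ρ_L(μ,ν) : μ ≠ ν}`. -/
theorem stmt_3 (f : C(I, ℂ)) :
    lipConst f
      = ⨆ p : {p : ProbabilityMeasure I × ProbabilityMeasure I // p.1 ≠ p.2},
          ENNReal.ofReal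
            ((‖∫ a, f a ∂(p.1.1 : Measure I) - ∫ a, f a ∂(p.1.2 : Measure I)‖)
              / mkDistMeas p.1.1 p.1.2) := by
  apply le_antisymm
  · -- lipConst f ≤ sup
    apply iSup_le
    rintro ⟨⟨x, y⟩, hxy⟩
    refine le_trans (le_of_eq ?_)
      (le_iSup (fun p : {p : ProbabilityMeasure I × ProbabilityMeasure I // p.1 ≠ p.2} =>
        ENNReal.ofReal
          ((‖∫ a, f a ∂(p.1.1 : Measure I) - ∫ a, f a ∂(p.1.2 : Measure I)‖)
            / mkDistMeas p.1.1 p.1.2)) ⟨(diracPM x, diracPM y), diracPM_ne hxy⟩)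
    simp only [integral_diracPM, mkDist_dirac hxy]
  · -- sup ≤ lipConst f
    apply iSup_le
    rintro ⟨⟨μ, ν⟩, hμν⟩
    rcases eq_or_ne (lipConst f) ⊤ with htop | htop
    · rw [htop]; exact le_top
    set K : ℝ := (lipConst f).toReal with hKdef
    have hK : 0 ≤ K := ENNReal.toReal_nonneg
    have hKf : lipConst f ≤ ENNReal.ofReal K := by
      rw [hKdef, ENNReal.ofReal_toReal htop]
    have hlip := lip_of_lipConst_le hK hKf
    set ρ : ℝ := mkDistMeas μ ν with hρdef
    have hρ0 : 0 ≤ ρ := mkDist_nonneg μ ν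
    have key : ‖∫ a, f a ∂(μ : Measure I) - ∫ a, f a ∂(ν : Measure I)‖ ≤ K * ρ := by
      rcases eq_or_lt_of_le hK with hK0 | hKpos
      · -- K = 0 : f is constant
        have hconst : ∀ a : I, f a = f 0 := by
          intro a
          have := hlip a 0
          rw [← hK0, zero_mul] at this
          have h0 : ‖f a - f 0‖ = 0 := le_antisymm this (norm_nonneg _)
          rwa [norm_eq_zero, sub_eq_zero] at h0
        have hint : ∀ θ : ProbabilityMeasure I, ∫ a, f a ∂(θ : Measure I) = f 0 := by
          intro θ
          calc ∫ a, f a ∂(θ : Measure I) = ∫ _, f 0 ∂(θ : Measure I) := by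
                apply integral_congr_ae
                exact Filter.Eventually.of_forall hconst
          _ = f 0 := by simp
        rw [hint μ, hint ν, sub_self, norm_zero, ← hK0, zero_mul]
      · -- K > 0
        set g : C(I, ℂ) := (K : ℂ)⁻¹ • f with hgdef
        have hgval : ∀ a : I, g a = (K : ℂ)⁻¹ * f a := fun a => rfl
        have hg1 : lipConst g ≤ 1 := by
          apply lipConst_one_of
          intro x y
          rw [hgval, hgval, ← mul_sub, norm_mul]
          have : ‖((K : ℂ))⁻¹‖ = K⁻¹ := by
            rw [norm_inv, Complex.norm_real, Real.norm_eq_abs, abs_of_pos hKpos]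
          rw [this, inv_mul_le_iff₀ hKpos]
          exact hlip x y
        have hmem := mem_mk_set μ ν hg1
        have hle : ‖∫ a, g a ∂(μ : Measure I) - ∫ a, g a ∂(ν : Measure I)‖ ≤ ρ :=
          le_csSup (mk_set_bddAbove μ ν) hmem
        have hint : ∀ θ : ProbabilityMeasure I,
            ∫ a, g a ∂(θ : Measure I) = (K : ℂ)⁻¹ * ∫ a, f a ∂(θ : Measure I) := by
          intro θ
          simp only [hgval]
          rw [integral_const_mul]
        rw [hint, hint, ← mul_sub, norm_mul] at hle
        have hnK : ‖((K : ℂ))⁻¹‖ = K⁻¹ := by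
          rw [norm_inv, Complex.norm_real, Real.norm_eq_abs, abs_of_pos hKpos]
        rw [hnK] at hle
        calc ‖∫ a, f a ∂(μ : Measure I) - ∫ a, f a ∂(ν : Measure I)‖
            = K * (K⁻¹ * ‖∫ a, f a ∂(μ : Measure I) - ∫ a, f a ∂(ν : Measure I)‖) := by
              field_simp
        _ ≤ K * ρ := by gcongr
    -- finish
    have hdiv : ‖∫ a, f a ∂(μ : Measure I) - ∫ a, f a ∂(ν : Measure I)‖ / ρ ≤ K := by
      rcases eq_or_lt_of_le hρ0 with hρz | hρpos
      · rw [← hρz, div_zero]; exact hK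
      · rw [div_le_iff₀ hρpos]; exact key
    calc ENNReal.ofReal (‖∫ a, f a ∂(μ : Measure I) - ∫ a, f a ∂(ν : Measure I)‖ / ρ)
        ≤ ENNReal.ofReal K := ENNReal.ofReal_le_ofReal hdiv
    _ = lipConst f := ENNReal.ofReal_toReal htop
end

section
/- Let {(A_n, L_n), φ_n} be an inductive sequence of compact quantum metric spaces with inductive limit A, ρ the induced metric on S(A) (via the weighted sum of Monge–Kantorovich metrics), and L(a) = sup{|μ(a)-ν(a)|/ρ(μ,ν) : μ ≠ ν in S(A)}. Then for every n and every a ∈ A_n with L_n(a) < ∞, one has L(φ^n(a)) ≤ 2^n L_n(a)(1 + diam(S(A_n), ρ_{L_n})) < ∞. In particular, ⋃_n φ^n(dom L_n) ⊆ dom L, so dom L is dense in A and L is a Lipschitz seminorm on A. -/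
open scoped ENNReal

/-- A state on a unital C*-algebra: a weak*-continuous unital positive linear functional. -/
def IsState {A : Type*} [CStarAlgebra A] (μ : WeakDual ℂ A) : Prop :=
  μ 1 = 1 ∧ ∀ a : A, 0 ≤ (μ (star a * a)).re ∧ (μ (star a * a)).im = 0

/-- The state space of a unital C*-algebra, with the weak* topology. -/
abbrev StateSp (A : Type*) [CStarAlgebra A] := {μ : WeakDual ℂ A // IsState μ}

/-- The difference-quotient seminorm associated to a distance function `ρ` on the state space. -/
noncomputable def diffQuot {A : Type*} [CStarAlgebra A]
    (ρ : StateSp A → StateSp A → ℝ) (a : A) : ℝ≥0∞ :=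
  ⨆ p : {p : StateSp A × StateSp A // p.1 ≠ p.2},
    ENNReal.ofReal (‖p.1.1.1 a - p.1.2.1 a‖ / ρ p.1.1 p.1.2)

/-- The Monge–Kantorovich distance associated to a (possibly `∞`-valued) seminorm `L`. -/
noncomputable def mkDist {A : Type*} (L : A → ℝ≥0∞) (μ ν : A → ℂ) : ℝ :=
  sSup {r : ℝ | ∃ a : A, L a ≤ 1 ∧ r = ‖μ a - ν a‖}
/-- A compact quantum metric space structure (a Lip-norm) on a unital C*-algebra `A`. -/
structure CQMS (A : Type*) [CStarAlgebra A] where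
  /-- The Lip-norm, a possibly `∞`-valued seminorm. -/
  L : A → ℝ≥0∞
  add_le : ∀ a b : A, L (a + b) ≤ L a + L b
  smul_eq : ∀ (c : ℂ) (a : A), L (c • a) = (‖c‖₊ : ℝ≥0∞) * L a
  star_eq : ∀ a : A, L (star a) = L a
  eq_zero_iff : ∀ a : A, L a = 0 ↔ ∃ c : ℂ, a = c • (1 : A)
  dense_dom : Dense {a : A | L a ≠ ∞}
  /-- The Monge–Kantorovich metric associated to `L` metrizes the weak* topology on states. -/
  metrizes : ∃ m : MetricSpace (StateSp A),
    (∀ μ ν : StateSp A, @dist _ m.toDist μ ν = mkDist L (fun a => μ.1 a) (fun a => ν.1 a)) ∧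
    m.toUniformSpace.toTopologicalSpace = (inferInstance : TopologicalSpace (StateSp A))

/-- The inverse-limit (weighted-sum) distance on the state space of the inductive limit:
`ρ(μ,ν) = Σ 2^{-n} ρ_{L_n}(μ∘Φⁿ, ν∘Φⁿ)/(1 + ρ_{L_n}(μ∘Φⁿ, ν∘Φⁿ))`. -/
noncomputable def rhoInd {A : ℕ → Type*} [∀ n, CStarAlgebra (A n)] {B : Type*} [CStarAlgebra B]
    (q : ∀ n, CQMS (A n)) (Φ : ∀ n, A n →⋆ₐ[ℂ] B) (μ ν : StateSp B) : ℝ :=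
  ∑' n : ℕ, (1 / 2 : ℝ) ^ (n + 1) *
    (mkDist (q n).L (fun a => μ.1 (Φ n a)) (fun a => ν.1 (Φ n a)) /
      (1 + mkDist (q n).L (fun a => μ.1 (Φ n a)) (fun a => ν.1 (Φ n a))))

/-! ### Auxiliary lemmas -/

section StateFacts
variable {A B : Type*} [CStarAlgebra A] [CStarAlgebra B]

lemma state_nonneg {μ : WeakDual ℂ A} (hμ : IsState μ) {x : A}
    (hx : x ∈ AddSubmonoid.closure (Set.range fun s : A => star s * s)) :
    0 ≤ (μ x).re ∧ (μ x).im = 0 := by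
  induction hx using AddSubmonoid.closure_induction with
  | mem y hy => obtain ⟨s, rfl⟩ := hy; exact hμ.2 s
  | zero => simp
  | add y z _ _ hy hz =>
      simp only [map_add, Complex.add_re, Complex.add_im]
      exact ⟨by linarith [hy.1, hz.1], by rw [hy.2, hz.2]; ring⟩

lemma state_apply_algebraMap {μ : WeakDual ℂ A} (hμ : IsState μ) (r : ℝ) :
    μ (algebraMap ℝ A r) = (r : ℂ) := by
  rw [IsScalarTower.algebraMap_apply ℝ ℂ A, Algebra.algebraMap_eq_smul_one, map_smul, hμ.1,
    smul_eq_mul, mul_one]; rfl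

lemma state_selfAdjoint {μ : WeakDual ℂ A} (hμ : IsState μ) {h : A} (hh : IsSelfAdjoint h) :
    (μ h).im = 0 ∧ |(μ h).re| ≤ ‖h‖ := by
  letI := CStarAlgebra.spectralOrder A
  haveI := CStarAlgebra.spectralOrderedRing A
  have key : ∀ x : A, (0:A) ≤ x → 0 ≤ (μ x).re ∧ (μ x).im = 0 := fun x hx =>
    state_nonneg hμ (StarOrderedRing.nonneg_iff.mp hx)
  have hp : (0:A) ≤ algebraMap ℝ A ‖h‖ + h := by
    have := hh.neg_algebraMap_norm_le_self
    rwa [neg_le_iff_add_nonneg, add_comm] at this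
  have hq : (0:A) ≤ algebraMap ℝ A ‖h‖ - h := by
    have := hh.le_algebraMap_norm_self
    rwa [← sub_nonneg] at this
  have h1 := key _ hp
  have h2 := key _ hq
  rw [map_add, Complex.add_re, Complex.add_im, state_apply_algebraMap hμ] at h1
  rw [map_sub, Complex.sub_re, Complex.sub_im, state_apply_algebraMap hμ] at h2
  simp only [Complex.ofReal_re, Complex.ofReal_im] at h1 h2
  constructor
  · linarith [h1.2, h2.2]
  · rw [abs_le]; constructor <;> linarith [h1.1, h2.1]

lemma state_norm_le {μ : WeakDual ℂ A} (hμ : IsState μ) (a : A) : ‖μ a‖ ≤ 2 * ‖a‖ := by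
  set h : A := (2⁻¹ : ℂ) • (a + star a) with hh
  set k : A := (-(Complex.I)/2) • (a - star a) with hk
  have hsa_h : IsSelfAdjoint h := by
    simp only [IsSelfAdjoint, hh, star_smul, star_add, star_star]
    rw [add_comm (star a) a]
    congr 1
    simp [Complex.ext_iff]
  have hsa_k : IsSelfAdjoint k := by
    simp only [IsSelfAdjoint, hk, star_smul, star_sub, star_star]
    rw [show star (-(Complex.I)/2) = (Complex.I)/2 by simp [Complex.ext_iff],
      show star a - a = -(a - star a) by abel, smul_neg, ← neg_smul, neg_div]
  clear_value h k
  have hdecomp : a = h + Complex.I • k := by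
    rw [hh, hk, smul_smul]
    rw [show Complex.I * (-(Complex.I)/2) = (2⁻¹:ℂ) by norm_num [Complex.ext_iff]]
    rw [← smul_add]
    rw [show a + star a + (a - star a) = (2:ℂ) • a by push_cast [two_smul]; abel]
    rw [smul_smul]; norm_num
  have hnh : ‖h‖ ≤ ‖a‖ := by
    rw [hh, norm_smul]
    calc ‖(2⁻¹:ℂ)‖ * ‖a + star a‖ ≤ ‖(2⁻¹:ℂ)‖ * (‖a‖ + ‖star a‖) := by
          gcongr; exact norm_add_le _ _
      _ = ‖a‖ := by rw [norm_star]; simp; ring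
  have hnk : ‖k‖ ≤ ‖a‖ := by
    rw [hk, norm_smul]
    calc ‖(-(Complex.I)/2:ℂ)‖ * ‖a - star a‖ ≤ ‖(-(Complex.I)/2:ℂ)‖ * (‖a‖ + ‖star a‖) := by
          gcongr; exact norm_sub_le _ _
      _ = ‖a‖ := by rw [norm_star]; simp; ring
  have bh := state_selfAdjoint hμ hsa_h
  have bk := state_selfAdjoint hμ hsa_k
  have nb : ∀ {z : ℂ}, z.im = 0 → ‖z‖ = |z.re| := by
    intro z hz
    rw [Complex.norm_def, Complex.normSq_apply, hz]
    simp [Real.sqrt_mul_self_eq_abs]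
  calc ‖μ a‖ = ‖μ h + Complex.I * μ k‖ := by
        rw [hdecomp, map_add, map_smul, smul_eq_mul]
    _ ≤ ‖μ h‖ + ‖Complex.I * μ k‖ := norm_add_le _ _
    _ = ‖μ h‖ + ‖μ k‖ := by rw [norm_mul, Complex.norm_I, one_mul]
    _ ≤ ‖h‖ + ‖k‖ := by rw [nb bh.1, nb bk.1]; exact add_le_add bh.2 bk.2
    _ ≤ 2 * ‖a‖ := by linarith

lemma isClosed_states : IsClosed {μ : WeakDual ℂ A | IsState μ} := by
  have : {μ : WeakDual ℂ A | IsState μ} =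
      {μ : WeakDual ℂ A | μ 1 = 1} ∩
        ⋂ a : A, ({μ : WeakDual ℂ A | 0 ≤ (μ (star a * a)).re} ∩
          {μ : WeakDual ℂ A | (μ (star a * a)).im = 0}) := by
    ext μ; simp only [Set.mem_setOf_eq, Set.mem_inter_iff, Set.mem_iInter, IsState]
  rw [this]
  refine IsClosed.inter (isClosed_eq (WeakDual.eval_continuous 1) continuous_const) ?_
  refine isClosed_iInter fun a => IsClosed.inter ?_ ?_
  · exact isClosed_le continuous_const (Complex.continuous_re.comp (WeakDual.eval_continuous _))
  · exact isClosed_eq (Complex.continuous_im.comp (WeakDual.eval_continuous _)) continuous_const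

instance compactSpace_states : CompactSpace (StateSp A) := by
  refine isCompact_iff_compactSpace.mp ?_
  refine IsCompact.of_isClosed_subset
    (WeakDual.isCompact_closedBall (0 : StrongDual ℂ A) 2) isClosed_states ?_
  intro μ hμ
  simp only [Set.mem_preimage, Metric.mem_closedBall, dist_zero_right]
  refine ContinuousLinearMap.opNorm_le_bound _ (by norm_num) fun a => ?_
  simpa [mul_comm] using state_norm_le hμ a

/-- A unital star algebra homomorphism of C*-algebras as a continuous linear map. -/
noncomputable def staCLM (Φ : A →⋆ₐ[ℂ] B) : A →L[ℂ] B where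
  toLinearMap := Φ.toAlgHom.toLinearMap
  cont := AddMonoidHomClass.continuous_of_bound Φ 1
    (by simpa only [one_mul] using fun a => NonUnitalStarAlgHom.norm_apply_le Φ a)

/-- Pull back a state along a unital star homomorphism. -/
noncomputable def pullState (Φ : A →⋆ₐ[ℂ] B) (μ : StateSp B) : StateSp A := by
  refine ⟨(show B →L[ℂ] ℂ from μ.1).comp (staCLM Φ), ?_, fun a => ?_⟩
  · show μ.1 (Φ 1) = 1
    rw [map_one]; exact μ.2.1
  · show 0 ≤ (μ.1 (Φ (star a * a))).re ∧ (μ.1 (Φ (star a * a))).im = 0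
    rw [map_mul, map_star]
    exact μ.2.2 (Φ a)

lemma pullState_fun (Φ : A →⋆ₐ[ℂ] B) (μ : StateSp B) :
    (fun a => μ.1 (Φ a)) = (fun a => (pullState Φ μ).1 a) := rfl

end StateFacts

section MKFacts
variable {A : Type*} [CStarAlgebra A]

lemma CQMS.L_zero (q : CQMS A) : q.L 0 = 0 := by
  have := q.smul_eq 0 0
  simpa using this

lemma mk_key (q : CQMS A) (μ ν : StateSp A) {a : A} (ha : q.L a ≤ 1) :
    ‖μ.1 a - ν.1 a‖ ≤ mkDist q.L (fun x => μ.1 x) (fun x => ν.1 x) := by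
  obtain ⟨m, hm, -⟩ := q.metrizes
  by_cases hne : μ = ν
  · subst hne; simp only [sub_self, norm_zero]
    rw [← hm μ μ, @dist_self _ m.toPseudoMetricSpace]
  · have hbdd : BddAbove {r : ℝ | ∃ a : A, q.L a ≤ 1 ∧ r = ‖μ.1 a - ν.1 a‖} := by
      by_contra hb
      have : mkDist q.L (fun x => μ.1 x) (fun x => ν.1 x) = 0 :=
        Real.sSup_of_not_bddAbove hb
      rw [← hm μ ν] at this
      exact absurd this (ne_of_gt ((@dist_pos _ m μ ν).mpr hne))
    exact le_csSup hbdd ⟨a, ha, rfl⟩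

lemma mk_nonneg (q : CQMS A) (μ ν : StateSp A) :
    0 ≤ mkDist q.L (fun x => μ.1 x) (fun x => ν.1 x) := by
  obtain ⟨m, hm, -⟩ := q.metrizes
  rw [← hm μ ν]; exact @dist_nonneg _ m.toPseudoMetricSpace μ ν

lemma mk_eq_zero (q : CQMS A) (μ ν : StateSp A)
    (h : mkDist q.L (fun x => μ.1 x) (fun x => ν.1 x) = 0) : μ = ν := by
  obtain ⟨m, hm, -⟩ := q.metrizes
  rw [← hm μ ν] at h
  exact @eq_of_dist_eq_zero _ m μ ν h

lemma mk_bddAbove (q : CQMS A) :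
    BddAbove {r : ℝ | ∃ μ ν : StateSp A,
      r = mkDist q.L (fun x => μ.1 x) (fun x => ν.1 x)} := by
  obtain ⟨m, hm, ht⟩ := q.metrizes
  haveI h2 : @CompactSpace (StateSp A) m.toUniformSpace.toTopologicalSpace := by
    rw [ht]; infer_instance
  have hK : @IsCompact (StateSp A × StateSp A)
      (@instTopologicalSpaceProd _ _ m.toUniformSpace.toTopologicalSpace
        m.toUniformSpace.toTopologicalSpace) (Set.univ ×ˢ Set.univ) :=
    @IsCompact.prod _ _ m.toUniformSpace.toTopologicalSpace m.toUniformSpace.toTopologicalSpace _ _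
      (@CompactSpace.isCompact_univ _ _ h2) (@CompactSpace.isCompact_univ _ _ h2)
  rw [Set.univ_prod_univ] at hK
  have hcont : @Continuous (StateSp A × StateSp A) ℝ
      (@instTopologicalSpaceProd _ _ m.toUniformSpace.toTopologicalSpace
        m.toUniformSpace.toTopologicalSpace) _
      (fun p => @dist _ m.toDist p.1 p.2) := @continuous_dist _ m.toPseudoMetricSpace
  have himg : IsCompact ((fun p : StateSp A × StateSp A =>
      @dist _ m.toDist p.1 p.2) '' Set.univ) :=
    @IsCompact.image _ _ (@instTopologicalSpaceProd _ _ m.toUniformSpace.toTopologicalSpace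
      m.toUniformSpace.toTopologicalSpace) _ _ _ hK hcont
  have heq : {r : ℝ | ∃ μ ν : StateSp A,
      r = mkDist q.L (fun x => μ.1 x) (fun x => ν.1 x)} =
      (fun p : StateSp A × StateSp A => @dist _ m.toDist p.1 p.2) '' Set.univ := by
    ext r
    constructor
    · rintro ⟨μ, ν, rfl⟩; exact ⟨(μ, ν), trivial, (hm μ ν)⟩
    · rintro ⟨⟨μ, ν⟩, -, rfl⟩; exact ⟨μ, ν, hm μ ν⟩
  rw [heq]
  exact himg.bddAbove

lemma mk_sSup_nonneg (q : CQMS A) :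
    0 ≤ sSup {r : ℝ | ∃ μ ν : StateSp A,
      r = mkDist q.L (fun x => μ.1 x) (fun x => ν.1 x)} := by
  apply Real.sSup_nonneg
  rintro r ⟨μ, ν, rfl⟩
  exact mk_nonneg q μ ν

end MKFacts

section Rho
variable {A : ℕ → Type*} [∀ n, CStarAlgebra (A n)] {B : Type*} [CStarAlgebra B]
  (q : ∀ n, CQMS (A n)) (Φ : ∀ n, A n →⋆ₐ[ℂ] B)

lemma rho_d_nonneg (n : ℕ) (μ ν : StateSp B) :
    0 ≤ mkDist (q n).L (fun a => μ.1 (Φ n a)) (fun a => ν.1 (Φ n a)) := by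
  rw [pullState_fun (Φ n) μ, pullState_fun (Φ n) ν]
  exact mk_nonneg (q n) _ _

lemma rho_summable (μ ν : StateSp B) :
    Summable (fun n : ℕ => (1 / 2 : ℝ) ^ (n + 1) *
      (mkDist (q n).L (fun a => μ.1 (Φ n a)) (fun a => ν.1 (Φ n a)) /
        (1 + mkDist (q n).L (fun a => μ.1 (Φ n a)) (fun a => ν.1 (Φ n a))))) := by
  refine Summable.of_nonneg_of_le (fun n => ?_) (fun n => ?_)
    (summable_geometric_two.mul_left (1/2 : ℝ))
  · have := rho_d_nonneg q Φ n μ ν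
    positivity
  · have hd := rho_d_nonneg q Φ n μ ν
    have h1 : mkDist (q n).L (fun a => μ.1 (Φ n a)) (fun a => ν.1 (Φ n a)) /
        (1 + mkDist (q n).L (fun a => μ.1 (Φ n a)) (fun a => ν.1 (Φ n a))) ≤ 1 :=
      (div_le_one (by linarith)).mpr (by linarith)
    calc (1 / 2 : ℝ) ^ (n + 1) * _ ≤ (1 / 2 : ℝ) ^ (n + 1) * 1 :=
          mul_le_mul_of_nonneg_left h1 (by positivity)
      _ = 1/2 * (1/2)^n := by rw [mul_one, pow_succ]; ring
    
lemma rho_nonneg (μ ν : StateSp B) : 0 ≤ rhoInd q Φ μ ν := by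
  refine tsum_nonneg fun n => ?_
  have := rho_d_nonneg q Φ n μ ν
  positivity

lemma rho_ge (n : ℕ) (μ ν : StateSp B) :
    (1 / 2 : ℝ) ^ (n + 1) *
      (mkDist (q n).L (fun a => μ.1 (Φ n a)) (fun a => ν.1 (Φ n a)) /
        (1 + mkDist (q n).L (fun a => μ.1 (Φ n a)) (fun a => ν.1 (Φ n a)))) ≤
      rhoInd q Φ μ ν := by
  refine (rho_summable q Φ μ ν).le_tsum n fun j _ => ?_
  have := rho_d_nonneg q Φ j μ ν
  positivity

lemma main_bound (n : ℕ) (a : A n) (ha : (q n).L a ≠ ∞) (μ ν : StateSp B) :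
    ‖μ.1 (Φ n a) - ν.1 (Φ n a)‖ / rhoInd q Φ μ ν ≤
      (2:ℝ)^(n+1) * (1 + sSup {r : ℝ | ∃ μ' ν' : StateSp (A n),
        r = mkDist (q n).L (fun x => μ'.1 x) (fun x => ν'.1 x)}) * ((q n).L a).toReal := by
  set D := sSup {r : ℝ | ∃ μ' ν' : StateSp (A n),
    r = mkDist (q n).L (fun x => μ'.1 x) (fun x => ν'.1 x)} with hD
  have hD0 : 0 ≤ D := mk_sSup_nonneg (q n)
  set l := ((q n).L a).toReal with hl
  have hl0 : 0 ≤ l := ENNReal.toReal_nonneg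
  set d := mkDist (q n).L (fun x => μ.1 (Φ n x)) (fun x => ν.1 (Φ n x)) with hd
  have hd0 : 0 ≤ d := rho_d_nonneg q Φ n μ ν
  have hdD : d ≤ D := by
    refine le_csSup (mk_bddAbove (q n)) ⟨pullState (Φ n) μ, pullState (Φ n) ν, ?_⟩
    rw [hd, pullState_fun (Φ n) μ, pullState_fun (Φ n) ν]
  have hρ0 : 0 ≤ rhoInd q Φ μ ν := rho_nonneg q Φ μ ν
  have hρg : (1 / 2 : ℝ) ^ (n + 1) * (d / (1 + d)) ≤ rhoInd q Φ μ ν := rho_ge q Φ n μ ν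
  have hN : ‖μ.1 (Φ n a) - ν.1 (Φ n a)‖ ≤ l * d := by
    by_cases hz : (q n).L a = 0
    · obtain ⟨c, rfl⟩ := ((q n).eq_zero_iff a).mp hz
      have : ∀ κ : StateSp B, κ.1 (Φ n (c • 1)) = c := by
        intro κ
        rw [map_smul, map_one, map_smul, κ.2.1, smul_eq_mul, mul_one]
      rw [this μ, this ν, sub_self, norm_zero]
      positivity
    · have hlpos : 0 < l := ENNReal.toReal_pos hz ha
      set a' := ((l⁻¹ : ℝ) : ℂ) • a with ha'
      have hLa' : (q n).L a' ≤ 1 := by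
        rw [ha', (q n).smul_eq]
        have h1 : (‖((l⁻¹ : ℝ) : ℂ)‖₊ : ℝ≥0∞) = ENNReal.ofReal l⁻¹ := by
          rw [Complex.nnnorm_real, ← Real.toNNReal_eq_nnnorm_of_nonneg (by positivity)]
          rfl
        have h2 : (q n).L a = ENNReal.ofReal l := by
          rw [hl, ENNReal.ofReal_toReal ha]
        rw [h1, h2, ← ENNReal.ofReal_mul (by positivity), inv_mul_cancel₀ (ne_of_gt hlpos),
          ENNReal.ofReal_one]
      have hkey : ‖μ.1 (Φ n a') - ν.1 (Φ n a')‖ ≤ d := by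
        rw [hd, pullState_fun (Φ n) μ, pullState_fun (Φ n) ν]
        exact mk_key (q n) (pullState (Φ n) μ) (pullState (Φ n) ν) hLa'
      have heval : ∀ κ : StateSp B, κ.1 (Φ n a') = ((l⁻¹ : ℝ) : ℂ) * κ.1 (Φ n a) := by
        intro κ
        rw [ha', map_smul, map_smul, smul_eq_mul]
      rw [heval μ, heval ν, ← mul_sub, norm_mul, Complex.norm_real, Real.norm_eq_abs,
        abs_of_pos (by positivity)] at hkey
      rwa [inv_mul_le_iff₀ hlpos] at hkey
  by_cases hdz : d = 0
  · have hμν : pullState (Φ n) μ = pullState (Φ n) ν := by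
      refine mk_eq_zero (q n) _ _ ?_
      rw [← pullState_fun (Φ n) μ, ← pullState_fun (Φ n) ν, ← hd, hdz]
    have : μ.1 (Φ n a) = ν.1 (Φ n a) := by
      have := congrArg (fun κ : StateSp (A n) => κ.1 a) hμν
      exact this
    rw [this, sub_self, norm_zero, zero_div]
    positivity
  · have hdpos : 0 < d := lt_of_le_of_ne hd0 (Ne.symm hdz)
    have hρpos : 0 < (1 / 2 : ℝ) ^ (n + 1) * (d / (1 + d)) := by positivity
    have h1d : (0:ℝ) < 1 + d := by linarith
    calc ‖μ.1 (Φ n a) - ν.1 (Φ n a)‖ / rhoInd q Φ μ ν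
        ≤ (l * d) / ((1 / 2 : ℝ) ^ (n + 1) * (d / (1 + d))) :=
          div_le_div₀ (by positivity) hN hρpos hρg
      _ = (2:ℝ)^(n+1) * (1 + d) * l := by
          rw [div_eq_iff (ne_of_gt hρpos)]
          field_simp
          ring_nf; rw [mul_assoc, ← mul_pow]; norm_num
      _ ≤ (2:ℝ)^(n+1) * (1 + D) * l := by gcongr

end Rho

/-- The induced difference-quotient seminorm `L` on the inductive limit satisfies
`L(Φⁿ(a)) ≤ 2ⁿ Lₙ(a)(1 + diam(S(Aₙ), ρ_{Lₙ}))`, is finite on images of Lipschitz elements,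
and hence has dense domain (so it is a Lipschitz seminorm). -/
theorem stmt_10 (A : ℕ → Type*) [∀ n, CStarAlgebra (A n)]
    (q : ∀ n, CQMS (A n))
    (φ : ∀ n, A n →⋆ₐ[ℂ] A (n + 1))
    (hφlip : ∀ (n : ℕ) (a : A n), (q n).L a ≠ ∞ → (q (n + 1)).L (φ n a) ≠ ∞)
    (B : Type*) [CStarAlgebra B]
    (Φ : ∀ n, A n →⋆ₐ[ℂ] B)
    (hcomp : ∀ (n : ℕ) (a : A n), Φ (n + 1) (φ n a) = Φ n a)
    (hdense : Dense (⋃ n, Set.range (Φ n))) :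
    (∀ (n : ℕ) (a : A n),
      diffQuot (rhoInd q Φ) (Φ n a)
        ≤ ENNReal.ofReal ((2 : ℝ) ^ (n + 1) *
            (1 + sSup {r : ℝ | ∃ μ ν : StateSp (A n),
                r = mkDist (q n).L (fun x => μ.1 x) (fun x => ν.1 x)})) * (q n).L a) ∧
    (∀ (n : ℕ) (a : A n), (q n).L a ≠ ∞ → diffQuot (rhoInd q Φ) (Φ n a) ≠ ∞) ∧
    Dense {b : B | diffQuot (rhoInd q Φ) b ≠ ∞} := by
  have hDpos : ∀ n : ℕ, (0:ℝ) < (2 : ℝ) ^ (n + 1) *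
      (1 + sSup {r : ℝ | ∃ μ ν : StateSp (A n),
        r = mkDist (q n).L (fun x => μ.1 x) (fun x => ν.1 x)}) := by
    intro n
    have := mk_sSup_nonneg (q n)
    have h2 : (0:ℝ) < (2:ℝ)^(n+1) := by positivity
    nlinarith
  have part1 : ∀ (n : ℕ) (a : A n),
      diffQuot (rhoInd q Φ) (Φ n a)
        ≤ ENNReal.ofReal ((2 : ℝ) ^ (n + 1) *
            (1 + sSup {r : ℝ | ∃ μ ν : StateSp (A n),
                r = mkDist (q n).L (fun x => μ.1 x) (fun x => ν.1 x)})) * (q n).L a := by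
    intro n a
    by_cases ha : (q n).L a = ∞
    · rw [ha, ENNReal.mul_top]
      · exact le_top
      · rw [ne_eq, ENNReal.ofReal_eq_zero, not_le]
        exact hDpos n
    · unfold diffQuot
      refine iSup_le fun p => ?_
      refine le_trans (ENNReal.ofReal_le_ofReal (main_bound q Φ n a ha p.1.1 p.1.2)) ?_
      rw [ENNReal.ofReal_mul (le_of_lt (hDpos n)), ENNReal.ofReal_toReal ha]
  refine ⟨part1, ?_, ?_⟩
  · intro n a ha
    exact ne_top_of_le_ne_top (ENNReal.mul_ne_top ENNReal.ofReal_ne_top ha) (part1 n a)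
  · rw [dense_iff_inter_open]
    intro U hU hUne
    obtain ⟨b, hbmem, hbU⟩ := hdense.exists_mem_open hU hUne
    simp only [Set.mem_iUnion, Set.mem_range] at hbmem
    obtain ⟨n, a, rfl⟩ := hbmem
    have hΦc : Continuous (Φ n) := (staCLM (Φ n)).continuous
    have hV : IsOpen ((Φ n) ⁻¹' U) := hU.preimage hΦc
    obtain ⟨a', ha'dom, ha'V⟩ := (q n).dense_dom.exists_mem_open hV ⟨a, hbU⟩
    refine ⟨Φ n a', ha'V, ?_⟩
    exact ne_top_of_le_ne_top (ENNReal.mul_ne_top ENNReal.ofReal_ne_top ha'dom) (part1 n a')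
end
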